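/- arXiv:2012.06353 — 3 statements merged into one kernel-verified Lean document; each statement's English description precedes it below -/
import Mathlib

section
/- Let W : Ω × ℝ₊^d → ℝ be a jointly measurable random field with P-almost surely continuous paths such that for every deterministic z ∈ ℝ₊^d the law of W(z) is the Gaussian distribution N(μ(z), σ_W²(z)), where μ : ℝ₊^d → ℝ and σ_W² : ℝ₊^d → ℝ₊ are functions. Let Z = (Z₁,…,Z_d) : Ω → ℝ₊^d be a random vector independent of the σ-algebra generated by W. Then for every ξ ∈ ℝ, the characteristic function of L := W(Z₁,…,Z_d) satisfies E[exp(iξL)] = E[exp(iξ μ(Z₁,…,Z_d) − ½ ξ² σ_W²(Z₁,…,Z_d))]. -/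
/-!
If `Z` takes only countably many values, independence lets one freeze it: the pair
`(Z, (W(·, z))_z)` has product law, so `E f(W(Z)) = E φ(Z)` with `φ z = E f(W(z))`.
A general `Z` is the pointwise limit of countably-valued functions of `Z` (simple-function
approximations of the identity), and both sides pass to the limit by dominated convergence:
the left one because the paths of `W` are a.s. continuous, the right one because this makes
`φ` continuous. For `f x = exp(iξx)`, `φ z` is the characteristic function of
`N(μ z, σ_W²(z))`.
-/

open MeasureTheory ProbabilityTheory Complex Filter Topology TopologicalSpace
open scoped NNReal

namespace ProbabilityTheory

variable {Ω α β E : Type*} [MeasurableSpace Ω] {P : Measure Ω} [IsProbabilityMeasure P]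
  [NormedAddCommGroup E] [NormedSpace ℝ E]

theorem IndepFun.integral_comp_prodMk_eq_integral_integral [MeasurableSpace α]
    [MeasurableSpace β] {K : Ω → α} {X : Ω → β} (hKX : K ⟂ᵢ[P] X) (hK : Measurable K)
    (hX : Measurable X) {G : α × β → E} (hG : Integrable G ((P.map K).prod (P.map X))) :
    ∫ ω, G (K ω, X ω) ∂P = ∫ ω, ∫ ω', G (K ω, X ω') ∂P ∂P := by
  have hmap := (indepFun_iff_map_prod_eq_prod_map_map hK.aemeasurable hX.aemeasurable).1 hKX
  have hsections : ∀ᵐ k ∂P.map K, ∫ x, G (k, x) ∂P.map X = ∫ ω', G (k, X ω') ∂P :=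
    hG.prod_right_ae.mono fun k hk => integral_map hX.aemeasurable hk.aestronglyMeasurable
  rw [← integral_map (hK.prodMk hX).aemeasurable (hmap ▸ hG.aestronglyMeasurable), hmap,
    integral_prod G hG, integral_congr_ae hsections,
    integral_map hK.aemeasurable ((integrable_congr hsections).1 hG.integral_prod_left).1]

theorem Indep.integral_comp_eval_of_countable [MeasurableSpace α] [Countable α]
    [MeasurableSingletonClass α] [MeasurableSpace β] {K : Ω → α} {Y : α → Ω → β}
    (hind : Indep (MeasurableSpace.comap K inferInstance)
      (⨆ a, MeasurableSpace.comap (Y a) inferInstance) P)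
    (hK : Measurable K) (hY : ∀ a, Measurable (Y a))
    {f : β → E} (hf : StronglyMeasurable f) {C : ℝ} (hfC : ∀ b, ‖f b‖ ≤ C) :
    ∫ ω, f (Y (K ω) ω) ∂P = ∫ ω, ∫ ω', f (Y (K ω) ω') ∂P ∂P := by
  set X : Ω → α → β := fun ω a => Y a ω
  have hX : MeasurableSpace.comap X inferInstance =
      ⨆ a, MeasurableSpace.comap (Y a) inferInstance := by
    simp only [MeasurableSpace.pi, MeasurableSpace.comap_iSup, MeasurableSpace.comap_comp]
    rfl
  have hKX : K ⟂ᵢ[P] X := (IndepFun_iff_Indep K X P).2 (hX ▸ hind)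
  -- evaluation `α × (α → β) → β` is jointly measurable because `α` is countable
  have hG : StronglyMeasurable fun p : α × (α → β) => f (p.2 p.1) :=
    hf.comp_measurable (measurable_from_prod_countable_right fun a => measurable_pi_apply a)
  exact hKX.integral_comp_prodMk_eq_integral_integral hK (measurable_pi_lambda X hY)
    (Integrable.of_bound hG.aestronglyMeasurable C (ae_of_all _ fun p => hfC _))

theorem Indep.integral_comp_eval_comp_simpleFunc {γ : Type*} [MeasurableSpace α]
    [MeasurableSpace γ] [MeasurableSingletonClass γ] [MeasurableSpace β]
    {Z : Ω → α} {W : Ω → γ → β}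
    (hind : Indep (MeasurableSpace.comap Z inferInstance)
      (⨆ x, MeasurableSpace.comap (fun ω => W ω x) inferInstance) P)
    (hZ : Measurable Z) (hW : ∀ x, Measurable fun ω => W ω x) (s : SimpleFunc α γ)
    {f : β → E} (hf : StronglyMeasurable f) {C : ℝ} (hfC : ∀ b, ‖f b‖ ≤ C) :
    ∫ ω, f (W ω (s (Z ω))) ∂P = ∫ ω, ∫ ω', f (W ω' (s (Z ω))) ∂P ∂P := by
  set g : α → s.range := fun z => ⟨s z, s.mem_range_self z⟩
  have hg : Measurable g := s.measurable.subtype_mk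
  have hleft : MeasurableSpace.comap (g ∘ Z) inferInstance ≤
      MeasurableSpace.comap Z inferInstance := by
    rw [← MeasurableSpace.comap_comp]
    exact MeasurableSpace.comap_mono hg.comap_le
  have hright : (⨆ c : s.range, MeasurableSpace.comap (fun ω => W ω c) inferInstance) ≤
      ⨆ x, MeasurableSpace.comap (fun ω => W ω x) inferInstance :=
    iSup_le fun c => le_iSup (fun x => MeasurableSpace.comap (fun ω => W ω x) _) (c : γ)
  exact Indep.integral_comp_eval_of_countable (K := g ∘ Z) (Y := fun c ω => W ω c)
    (indep_of_indep_of_le_left (indep_of_indep_of_le_right hind hright) hleft) (hg.comp hZ)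
    (fun c => hW c) hf hfC

theorem Indep.integral_comp_eval_of_continuous [TopologicalSpace α] [PseudoMetrizableSpace α]
    [SecondCountableTopology α] [MeasurableSpace α] [OpensMeasurableSpace α]
    [MeasurableSingletonClass α] [TopologicalSpace β] [MeasurableSpace β]
    [OpensMeasurableSpace β] [SecondCountableTopologyEither β E]
    {Z : Ω → α} {W : Ω → α → β}
    (hind : Indep (MeasurableSpace.comap Z inferInstance)
      (⨆ x, MeasurableSpace.comap (fun ω => W ω x) inferInstance) P)
    (hZ : Measurable Z) (hW : Measurable fun p : Ω × α => W p.1 p.2)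
    (hWcont : ∀ᵐ ω ∂P, Continuous (W ω))
    {f : β → E} (hf : Continuous f) {C : ℝ} (hfC : ∀ b, ‖f b‖ ≤ C) :
    ∫ ω, f (W ω (Z ω)) ∂P = ∫ ω, ∫ ω', f (W ω' (Z ω)) ∂P ∂P := by
  have hWx : ∀ x, Measurable fun ω => W ω x := fun x =>
    hW.comp (measurable_id.prodMk measurable_const)
  set φ : α → E := fun x => ∫ ω', f (W ω' x) ∂P
  have hφ : Continuous φ :=
    continuous_of_dominated
      (fun x => (hf.stronglyMeasurable.comp_measurable (hWx x)).aestronglyMeasurable)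
      (fun x => ae_of_all _ fun ω => hfC _) (integrable_const C)
      (hWcont.mono fun ω hω => hf.comp hω)
  have hφC : ∀ x, ‖φ x‖ ≤ C := fun x => by
    simpa using norm_integral_le_of_norm_le_const (ae_of_all P fun ω => hfC (W ω x))
  set s := (stronglyMeasurable_id (α := α)).approx
  have hs : ∀ z, Tendsto (fun n => s n z) atTop (𝓝 z) :=
    stronglyMeasurable_id.tendsto_approx
  have hsZ : ∀ n, Measurable fun ω => s n (Z ω) := fun n => (s n).measurable.comp hZ
  have hlhs : Tendsto (fun n => ∫ ω, f (W ω (s n (Z ω))) ∂P) atTop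
      (𝓝 (∫ ω, f (W ω (Z ω)) ∂P)) :=
    tendsto_integral_of_dominated_convergence (fun _ => C)
      (fun n => (hf.stronglyMeasurable.comp_measurable
        (hW.comp (measurable_id.prodMk (hsZ n)))).aestronglyMeasurable)
      (integrable_const C) (fun n => ae_of_all _ fun ω => hfC _)
      (hWcont.mono fun ω hω => (hf.tendsto _).comp ((hω.tendsto _).comp (hs _)))
  have hrhs : Tendsto (fun n => ∫ ω, φ (s n (Z ω)) ∂P) atTop (𝓝 (∫ ω, φ (Z ω) ∂P)) :=
    tendsto_integral_of_dominated_convergence (fun _ => C)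
      (fun n => (hφ.comp_stronglyMeasurable (hsZ n).stronglyMeasurable).aestronglyMeasurable)
      (integrable_const C) (fun n => ae_of_all _ fun ω => hφC _)
      (ae_of_all _ fun ω => (hφ.tendsto _).comp (hs _))
  refine tendsto_nhds_unique (hlhs.congr fun n => ?_) hrhs
  exact hind.integral_comp_eval_comp_simpleFunc hZ hWx (s n) hf.stronglyMeasurable hfC

end ProbabilityTheory

theorem integral_cexp_I_mul_of_map_eq_gaussianReal {Ω : Type*} [MeasurableSpace Ω]
    {P : Measure Ω} {X : Ω → ℝ} {m : ℝ} {v : ℝ≥0} (hX : P.map X = gaussianReal m v)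
    (ξ : ℝ) :
    ∫ ω, cexp (I * ξ * X ω) ∂P = cexp (I * ξ * m - ξ ^ 2 * (v : ℝ) / 2) := by
  have hXm : AEMeasurable X P := aemeasurable_of_map_neZero (by rw [hX]; infer_instance)
  have h := charFun_gaussianReal (μ := m) (v := v) ξ
  rw [← hX, charFun_apply_real, integral_map hXm (by fun_prop)] at h
  convert h using 3
  · congr 1; ring
  all_goals ring

/-- Let `W : Ω × ℝ₊^d → ℝ` be a jointly measurable random field with
`P`-a.s. continuous paths such that `W(z) ∼ N(μ z, σ_W²(z))` for every deterministic `z`.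
Let `Z` be a random vector independent of the σ-algebra generated by `W`. Then the
characteristic function of `L := W(Z)` satisfies
`E[exp(iξL)] = E[exp(iξ μ(Z) − ½ ξ² σ_W²(Z))]`. -/
theorem charFun_subordinated_GRF
    {Ω : Type*} [MeasurableSpace Ω] (P : Measure Ω) [IsProbabilityMeasure P]
    (d : ℕ) (W : Ω → (Fin d → NNReal) → ℝ)
    (hW : Measurable fun p : Ω × (Fin d → NNReal) => W p.1 p.2)
    (hWcont : ∀ᵐ ω ∂P, Continuous (W ω))
    (μ : (Fin d → NNReal) → ℝ) (σW2 : (Fin d → NNReal) → NNReal)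
    (hlaw : ∀ z : Fin d → NNReal,
      Measure.map (fun ω => W ω z) P = gaussianReal (μ z) (σW2 z))
    (Z : Ω → Fin d → NNReal) (hZ : Measurable Z)
    (hindep : Indep (MeasurableSpace.comap Z inferInstance)
      (⨆ x : Fin d → NNReal, MeasurableSpace.comap (fun ω => W ω x) inferInstance) P)
    (ξ : ℝ) :
    ∫ ω, Complex.exp (Complex.I * ξ * (W ω (Z ω))) ∂P
      = ∫ ω, Complex.exp (Complex.I * ξ * (μ (Z ω)) - ξ ^ 2 * (σW2 (Z ω) : ℝ) / 2) ∂P := by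
  have hnorm : ∀ x : ℝ, ‖cexp (I * ξ * x)‖ ≤ 1 := fun x => by
    rw [mul_assoc, ← ofReal_mul, norm_exp_I_mul_ofReal]
  rw [hindep.integral_comp_eval_of_continuous hZ hW hWcont (by fun_prop) hnorm]
  exact integral_congr_ae (ae_of_all _ fun ω =>
    integral_cexp_I_mul_of_map_eq_gaussianReal (hlaw (Z ω)) ξ)
end

section
/- Let ν be a measure on (0,∞) with ∫₀^∞ min(y,1) ν(dy) < ∞, and define the measure ν^# on ℝ by ν^#(A) := ∫₀^∞ N(0,t)(A) ν(dt) for Borel sets A, where N(0,t) is the centered Gaussian distribution with variance t. Then for every ξ ∈ ℝ, ∫₀^∞ (exp(−½ξ²y) − 1) ν(dy) = ∫_{ℝ∖{0}} (exp(iξx) − 1 − iξx·1_{[−1,1]}(x)) ν^#(dx), and both integrals are absolutely convergent. -/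
/-!
Against `N(0,t)` the Lévy–Khinchin integrand integrates to `exp(-ξ²t/2) - 1`: the exponential
term is the characteristic function of `N(0,t)`, and the truncated linear term is odd, so it
integrates to zero against the symmetric Gaussian. The integrand is bounded by
`2(ξ² + 1) min(x², 1)`, whose `N(0,t)`-integral is at most `2(ξ² + 1) min(t, 1)` because
`N(0,t)` has second moment `t`. Hence `∫ min(y, 1) ν(dy) < ∞` makes the integrand integrable
against the mixture `ν^# = ∫ N(0,t) ν(dt)`, and Fubini for this mixture gives both the identity
and the integrability of the left-hand side.
-/

open MeasureTheory ProbabilityTheory Complex Set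
open scoped NNReal

theorem Function.Odd.integral_eq_zero {G E : Type*} [MeasurableSpace G] [AddGroup G]
    [MeasurableNeg G] [NormedAddCommGroup E] [NormedSpace ℝ E] {μ : Measure G}
    [μ.IsNegInvariant] {f : G → E} (hf : Function.Odd f) : ∫ x, f x ∂μ = 0 := by
  have h := integral_neg_eq_self f μ
  simp only [show ∀ x, f (-x) = -f x from hf, integral_neg] at h
  linear_combination (norm := module) (-1 / 2 : ℝ) • h

theorem Function.Odd.indicator {α β : Type*} [InvolutiveNeg α] [NegZeroClass β] {s : Set α}
    (hs : -s = s) {f : α → β} (hf : Function.Odd f) : Function.Odd (s.indicator f) := by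
  intro x
  by_cases hx : x ∈ s
  · have hx' : -x ∈ s := by rw [← hs]; simpa using hx
    simp [hx, hx', hf x]
  · have hx' : -x ∉ s := by rw [← hs]; simpa using hx
    simp [hx, hx']

instance isNegInvariant_gaussianReal_zero (v : ℝ≥0) : (gaussianReal 0 v).IsNegInvariant :=
  ⟨by rw [Measure.neg_def, gaussianReal_map_neg, neg_zero]⟩

theorem norm_cexp_I_mul_ofReal_sub_one_sub_le (u : ℝ) :
    ‖cexp (I * u) - 1 - I * u‖ ≤ 2 * u ^ 2 := by
  have hIu : ‖I * u‖ = |u| := by simp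
  by_cases hu : |u| ≤ 1
  · calc ‖cexp (I * u) - 1 - I * u‖ ≤ ‖I * u‖ ^ 2 :=
          norm_exp_sub_one_sub_id_le (hIu.trans_le hu)
      _ ≤ 2 * u ^ 2 := by rw [hIu, sq_abs]; nlinarith [sq_nonneg u]
  · calc ‖cexp (I * u) - 1 - I * u‖ ≤ ‖cexp (I * u) - 1‖ + ‖I * u‖ := norm_sub_le _ _
      _ ≤ |u| + |u| := add_le_add Real.norm_exp_I_mul_ofReal_sub_one_le hIu.le
      _ ≤ 2 * u ^ 2 := by nlinarith [sq_abs u]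

theorem norm_cexp_I_mul_ofReal_sub_one_le_two (u : ℝ) : ‖cexp (I * u) - 1‖ ≤ 2 :=
  (norm_sub_le _ _).trans (by rw [norm_exp_I_mul_ofReal, norm_one]; norm_num)

noncomputable def levyKhinchinIntegrand (ξ x : ℝ) : ℂ :=
  cexp (I * ξ * x) - 1 - I * ξ * (Icc (-1 : ℝ) 1).indicator (fun t => (t : ℂ)) x

@[fun_prop]
theorem measurable_levyKhinchinIntegrand (ξ : ℝ) : Measurable (levyKhinchinIntegrand ξ) := by
  have hind : Measurable ((Icc (-1 : ℝ) 1).indicator (fun t => (t : ℂ))) :=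
    Complex.measurable_ofReal.indicator measurableSet_Icc
  unfold levyKhinchinIntegrand
  fun_prop

theorem norm_levyKhinchinIntegrand_le (ξ x : ℝ) :
    ‖levyKhinchinIntegrand ξ x‖ ≤ 2 * (ξ ^ 2 + 1) * min (x ^ 2) 1 := by
  have hξx : I * ξ * x = I * ↑(ξ * x) := by push_cast; ring
  by_cases hx : x ∈ Icc (-1 : ℝ) 1
  · have hx2 : x ^ 2 ≤ 1 := by nlinarith [hx.1, hx.2]
    rw [levyKhinchinIntegrand, indicator_of_mem hx, hξx, min_eq_left hx2]
    calc _ ≤ 2 * (ξ * x) ^ 2 := norm_cexp_I_mul_ofReal_sub_one_sub_le _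
      _ ≤ _ := by nlinarith [sq_nonneg x, sq_nonneg ξ]
  · have hx2 : 1 ≤ x ^ 2 := by
      simp only [mem_Icc, not_and_or, not_le] at hx
      rcases hx with hx | hx <;> nlinarith
    rw [levyKhinchinIntegrand, indicator_of_notMem hx, mul_zero, sub_zero, hξx,
      min_eq_right hx2]
    calc _ ≤ 2 := norm_cexp_I_mul_ofReal_sub_one_le_two _
      _ ≤ _ := by nlinarith [sq_nonneg ξ]

theorem integrable_levyKhinchinIntegrand {μ : Measure ℝ} [IsFiniteMeasure μ] (ξ : ℝ) :
    Integrable (levyKhinchinIntegrand ξ) μ := by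
  refine .of_bound (by fun_prop) (2 * (ξ ^ 2 + 1)) (ae_of_all _ fun x => ?_)
  refine (norm_levyKhinchinIntegrand_le ξ x).trans ?_
  have := min_le_right (x ^ 2) 1
  nlinarith [sq_nonneg ξ]

theorem integrable_min_sq_one {μ : Measure ℝ} [IsFiniteMeasure μ] :
    Integrable (fun x : ℝ => min (x ^ 2) 1) μ :=
  .of_bound (by fun_prop) 1 (ae_of_all _ fun x => by
    rw [Real.norm_of_nonneg (by positivity)]
    exact min_le_right _ _)

theorem integral_min_sq_one_le {μ : Measure ℝ} [IsProbabilityMeasure μ]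
    (h : Integrable (fun x => x ^ 2) μ) : ∫ x, min (x ^ 2) 1 ∂μ ≤ min (∫ x, x ^ 2 ∂μ) 1 := by
  refine le_min (integral_mono integrable_min_sq_one h fun x => min_le_left _ _) ?_
  calc ∫ x, min (x ^ 2) 1 ∂μ ≤ ∫ _, (1 : ℝ) ∂μ :=
        integral_mono integrable_min_sq_one (integrable_const _) fun x => min_le_right _ _
    _ = 1 := by simp

theorem integral_sq_gaussianReal_zero (v : ℝ≥0) : ∫ x, x ^ 2 ∂gaussianReal 0 v = v := by
  simpa [integral_id_gaussianReal] using
    (variance_eq_integral measurable_id.aemeasurable (μ := gaussianReal 0 v)).symm.trans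
      variance_id_gaussianReal

theorem integral_norm_levyKhinchinIntegrand_gaussianReal_le (ξ : ℝ) (v : ℝ≥0) :
    ∫ x, ‖levyKhinchinIntegrand ξ x‖ ∂gaussianReal 0 v ≤ 2 * (ξ ^ 2 + 1) * min (v : ℝ) 1 := by
  have hsq : Integrable (fun x => x ^ 2) (gaussianReal 0 v) :=
    (memLp_id_gaussianReal 2).integrable_sq
  calc ∫ x, ‖levyKhinchinIntegrand ξ x‖ ∂gaussianReal 0 v
      ≤ ∫ x, 2 * (ξ ^ 2 + 1) * min (x ^ 2) 1 ∂gaussianReal 0 v := by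
        refine integral_mono (integrable_levyKhinchinIntegrand ξ).norm ?_
          (norm_levyKhinchinIntegrand_le ξ)
        exact integrable_min_sq_one.const_mul _
    _ = 2 * (ξ ^ 2 + 1) * ∫ x, min (x ^ 2) 1 ∂gaussianReal 0 v := integral_const_mul _ _
    _ ≤ _ := by
      gcongr
      simpa [integral_sq_gaussianReal_zero] using integral_min_sq_one_le hsq

theorem integral_levyKhinchinIntegrand_gaussianReal (ξ : ℝ) (v : ℝ≥0) :
    ∫ x, levyKhinchinIntegrand ξ x ∂gaussianReal 0 v = ↑(Real.exp (-(ξ ^ 2 / 2) * v) - 1) := by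
  have hodd : Function.Odd ((Icc (-1 : ℝ) 1).indicator (fun t => (t : ℂ))) :=
    Function.Odd.indicator (by simp [neg_Icc]) fun x => by simp
  have hchar : ∫ x, cexp (I * ξ * x) ∂gaussianReal 0 v = charFun (gaussianReal 0 v) ξ := by
    simp_rw [charFun_apply_real, mul_comm I, mul_right_comm]
  have hexp : Integrable (fun x : ℝ => cexp (I * ξ * x)) (gaussianReal 0 v) :=
    .of_bound (by fun_prop) 1 (ae_of_all _ fun x => by
      rw [show I * ξ * x = I * ↑(ξ * x) by push_cast; ring, norm_exp_I_mul_ofReal])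
  have hind : Integrable ((Icc (-1 : ℝ) 1).indicator (fun t => (t : ℂ))) (gaussianReal 0 v) :=
    .of_bound (Complex.measurable_ofReal.indicator measurableSet_Icc).aestronglyMeasurable 1
      (ae_of_all _ fun x => by
        by_cases hx : x ∈ Icc (-1 : ℝ) 1
        · simpa [indicator_of_mem hx, abs_le] using hx
        · simp [indicator_of_notMem hx])
  have hexp_sub : Integrable (fun x : ℝ => cexp (I * ξ * x) - 1) (gaussianReal 0 v) :=
    hexp.sub (integrable_const 1)
  have hind_mul : Integrable (fun x => I * ξ * (Icc (-1 : ℝ) 1).indicator (fun t => (t : ℂ)) x)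
      (gaussianReal 0 v) := hind.const_mul _
  simp only [levyKhinchinIntegrand]
  rw [integral_sub hexp_sub hind_mul,
    integral_sub hexp (integrable_const 1), integral_const_mul, hodd.integral_eq_zero, hchar,
    charFun_gaussianReal, integral_const, probReal_univ, one_smul]
  push_cast
  ring_nf

namespace MeasureTheory.Measure

variable {α β E : Type*} [MeasurableSpace α] [MeasurableSpace β] [NormedAddCommGroup E]
  [NormedSpace ℝ E] {μ : Measure α} {κ : Kernel α β} {f : β → E}

theorem integrable_integral_of_integrable_comp (hf : Integrable f (κ ∘ₘ μ)) :
    Integrable (fun x => ∫ y, f y ∂κ x) μ := by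
  rw [comp_eq_comp_const_apply] at hf
  simpa using hf.integral_comp

theorem integral_comp (hf : Integrable f (κ ∘ₘ μ)) :
    ∫ y, f y ∂(κ ∘ₘ μ) = ∫ x, ∫ y, f y ∂κ x ∂μ := by
  rw [comp_eq_comp_const_apply] at hf ⊢
  simpa using Kernel.integral_comp hf

end MeasureTheory.Measure

noncomputable def centeredGaussianKernel : Kernel ℝ ℝ where
  toFun t := gaussianReal 0 t.toNNReal
  measurable' := measurable_gaussianReal.comp (measurable_const.prodMk measurable_real_toNNReal)

@[simp]
theorem centeredGaussianKernel_apply (t : ℝ) :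
    centeredGaussianKernel t = gaussianReal 0 t.toNNReal := rfl

instance : IsMarkovKernel centeredGaussianKernel :=
  ⟨fun t => by rw [centeredGaussianKernel_apply]; infer_instance⟩

theorem integrable_min_toNNReal_one {ν : Measure ℝ}
    (hν : ∫⁻ y, ENNReal.ofReal (min y 1) ∂ν < ⊤) :
    Integrable (fun t => min (t.toNNReal : ℝ) 1) ν := by
  refine ⟨by fun_prop, ?_⟩
  rw [hasFiniteIntegral_iff_ofReal (ae_of_all _ fun t => by positivity)]
  convert hν using 3 with t
  rcases le_total t 0 with ht | ht
  · simp [Real.toNNReal_of_nonpos ht, ENNReal.ofReal_of_nonpos (min_le_of_left_le ht)]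
  · rw [Real.coe_toNNReal t ht]

theorem integrable_levyKhinchinIntegrand_comp {ν : Measure ℝ}
    (hν : ∫⁻ y, ENNReal.ofReal (min y 1) ∂ν < ⊤) (ξ : ℝ) :
    Integrable (levyKhinchinIntegrand ξ) (centeredGaussianKernel ∘ₘ ν) := by
  rw [Measure.integrable_comp_iff (by fun_prop)]
  refine ⟨ae_of_all _ fun t => integrable_levyKhinchinIntegrand ξ, ?_⟩
  have hmeas := (measurable_levyKhinchinIntegrand ξ).norm.stronglyMeasurable.integral_kernel
    (κ := centeredGaussianKernel)
  refine ((integrable_min_toNNReal_one hν).const_mul (2 * (ξ ^ 2 + 1))).mono'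
    hmeas.aestronglyMeasurable (ae_of_all _ fun t => ?_)
  rw [Real.norm_of_nonneg (integral_nonneg fun _ => norm_nonneg _)]
  exact integral_norm_levyKhinchinIntegrand_gaussianReal_le ξ _

theorem setIntegral_Ioi_eq_integral_comp_toNNReal {E : Type*} [NormedAddCommGroup E]
    [NormedSpace ℝ E] {ν : Measure ℝ} {g : ℝ → E} (hg : g 0 = 0) :
    ∫ t in Ioi 0, g t ∂ν = ∫ t, g t.toNNReal ∂ν := by
  rw [setIntegral_congr_fun (g := fun t => g t.toNNReal) measurableSet_Ioi fun t ht => by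
    simp only [Real.coe_toNNReal t (le_of_lt ht)]]
  exact setIntegral_eq_integral_of_forall_compl_eq_zero fun t ht => by
    simp [Real.toNNReal_of_nonpos (not_lt.mp ht), hg]

theorem integrableOn_Ioi_of_integrable_comp_toNNReal {E : Type*} [NormedAddCommGroup E]
    {ν : Measure ℝ} {g : ℝ → E} (h : Integrable (fun t => g t.toNNReal) ν) :
    IntegrableOn g (Ioi 0) ν :=
  h.integrableOn.congr_fun (fun t ht => by simp [Real.coe_toNNReal t (le_of_lt ht)])
    measurableSet_Ioi

theorem gaussian_mixture_levy_khinchin_integrand_identity_general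
    (ν : Measure ℝ) (hν_int : ∫⁻ y, ENNReal.ofReal (min y 1) ∂ν < ⊤)
    (ξ : ℝ) :
    IntegrableOn (fun y => Real.exp (-(ξ ^ 2 / 2) * y) - 1) (Set.Ioi 0) ν ∧
    IntegrableOn
      (fun x : ℝ => Complex.exp (Complex.I * ξ * x) - 1
        - Complex.I * ξ * (Set.Icc (-1 : ℝ) 1).indicator (fun t => (t : ℂ)) x)
      {(0 : ℝ)}ᶜ (ν.bind fun t => (gaussianReal 0 (Real.toNNReal t) : Measure ℝ)) ∧
    (↑(∫ y in Set.Ioi (0 : ℝ), (Real.exp (-(ξ ^ 2 / 2) * y) - 1) ∂ν) : ℂ)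
      = ∫ x in {(0 : ℝ)}ᶜ,
          (Complex.exp (Complex.I * ξ * x) - 1
            - Complex.I * ξ * (Set.Icc (-1 : ℝ) 1).indicator (fun t => (t : ℂ)) x)
          ∂(ν.bind fun t => (gaussianReal 0 (Real.toNNReal t) : Measure ℝ)) := by
  change _ ∧ IntegrableOn (levyKhinchinIntegrand ξ) {0}ᶜ (centeredGaussianKernel ∘ₘ ν) ∧
    _ = ∫ x in {0}ᶜ, levyKhinchinIntegrand ξ x ∂(centeredGaussianKernel ∘ₘ ν)
  have hf := integrable_levyKhinchinIntegrand_comp hν_int ξ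
  have hinner : (fun t => ∫ x, levyKhinchinIntegrand ξ x ∂centeredGaussianKernel t) =
      fun t => ((Real.exp (-(ξ ^ 2 / 2) * t.toNNReal) - 1 : ℝ) : ℂ) :=
    funext fun t => integral_levyKhinchinIntegrand_gaussianReal ξ t.toNNReal
  have hlhs : Integrable (fun t => Real.exp (-(ξ ^ 2 / 2) * t.toNNReal) - 1) ν := by
    have h := Measure.integrable_integral_of_integrable_comp hf
    rw [hinner] at h
    simpa only [RCLike.re_to_complex, ofReal_re] using h.re
  -- The kernel sends `t ≤ 0` to the Dirac mass at `0`, and both integrands vanish at `0`.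
  have hf_zero : ∀ x ∉ ({0}ᶜ : Set ℝ), levyKhinchinIntegrand ξ x = 0 := by
    simp [levyKhinchinIntegrand]
  refine ⟨integrableOn_Ioi_of_integrable_comp_toNNReal hlhs, hf.integrableOn, ?_⟩
  rw [setIntegral_Ioi_eq_integral_comp_toNNReal (by simp),
    setIntegral_eq_integral_of_forall_compl_eq_zero hf_zero, Measure.integral_comp hf, hinner,
    integral_complex_ofReal]

/-- Let `ν` be a measure on `(0,∞)` with `∫ min(y,1) ν(dy) < ∞` and let
`ν^#(A) := ∫₀^∞ N(0,t)(A) ν(dt)` be its Gaussian mixture. Then for every `ξ ∈ ℝ`,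
`∫₀^∞ (exp(−½ξ²y) − 1) ν(dy) = ∫_{ℝ∖{0}} (exp(iξx) − 1 − iξx·1_{[−1,1]}(x)) ν^#(dx)`,
and both integrals are absolutely convergent. -/
theorem gaussian_mixture_levy_khinchin_integrand_identity
    (ν : Measure ℝ) (hν_supp : ν (Set.Iic 0) = 0)
    (hν_int : ∫⁻ y, ENNReal.ofReal (min y 1) ∂ν < ⊤)
    (ξ : ℝ) :
    IntegrableOn (fun y => Real.exp (-(ξ ^ 2 / 2) * y) - 1) (Set.Ioi 0) ν ∧
    IntegrableOn
      (fun x : ℝ => Complex.exp (Complex.I * ξ * x) - 1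
        - Complex.I * ξ * (Set.Icc (-1 : ℝ) 1).indicator (fun t => (t : ℂ)) x)
      {(0 : ℝ)}ᶜ (ν.bind fun t => (gaussianReal 0 (Real.toNNReal t) : Measure ℝ)) ∧
    (↑(∫ y in Set.Ioi (0 : ℝ), (Real.exp (-(ξ ^ 2 / 2) * y) - 1) ∂ν) : ℂ)
      = ∫ x in {(0 : ℝ)}ᶜ,
          (Complex.exp (Complex.I * ξ * x) - 1
            - Complex.I * ξ * (Set.Icc (-1 : ℝ) 1).indicator (fun t => (t : ℂ)) x)
          ∂(ν.bind fun t => (gaussianReal 0 (Real.toNNReal t) : Measure ℝ)) :=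
  gaussian_mixture_levy_khinchin_integrand_identity_general ν hν_int ξ
end

section
/- Let W : Ω × ℝ₊^d → ℝ be a jointly measurable random field with P-almost surely continuous paths such that for every deterministic z ∈ ℝ₊^d the law of W(z) is N(0, σ_W²(z)), where σ_W(z) ≤ Σ_{j=1}^N c_j · z₁^{α₁^{(j)}} ⋯ z_d^{α_d^{(j)}} for all z ∈ ℝ₊^d, with N ∈ ℕ, c_j ≥ 0, α^{(j)} ∈ ℝ₊^d. Let Z₁,…,Z_d be mutually independent random variables taking values in ℕ₀ = {0,1,2,…}, independent of the σ-algebra generated by W, such that P(Z_i = k) ≤ C·k^{−η_i} for all integers k ≥ K, for constants C, K > 0 and η_i > 0. Set a := min{(η_i − 1)/α_i^{(j)} : 1 ≤ i ≤ d, 1 ≤ j ≤ N, α_i^{(j)} ≠ 0} (and a := +∞ if all α_i^{(j)} = 0). Then for every p ∈ [1, a), E[|W(Z₁,…,Z_d)|^p] < ∞. -/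
/-!
Conditioning on the countably valued index `Z`, which is independent of `W`, and using that
`W(z) ∼ σ_W(z) · G` for a standard Gaussian `G` gives `E|W(Z)|^p = E[σ_W(Z)^p] · E|G|^p`.
By the power-mean inequality, `σ_W(Z)^p` is bounded by a combination of the monomials
`∏ᵢ Z_i^{α_i^{(j)} p}`, whose expectations factor by the mutual independence of the `Z_i`.
Finally `E[Z_i^s] = ∑ₖ P(Z_i = k) k^s` is finite when `s ≤ 0`, and when `s < η_i − 1`
because its tail is dominated by `∑ₖ C k^{s − η_i}`.
-/

open MeasureTheory ProbabilityTheory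
open scoped ENNReal NNReal

theorem setLIntegral_eq_measure_mul_lintegral_of_indep {Ω : Type*}
    {m₁ m₂ mΩ : MeasurableSpace Ω} {μ : Measure Ω} (hm₁ : m₁ ≤ mΩ) (hm₂ : m₂ ≤ mΩ)
    (hindep : Indep m₁ m₂ μ) {A : Set Ω} (hA : MeasurableSet[m₁] A) {f : Ω → ℝ≥0∞}
    (hf : Measurable[m₂] f) :
    ∫⁻ ω in A, f ω ∂μ = μ A * ∫⁻ ω, f ω ∂μ := by
  have hind : Measurable[m₁] (A.indicator (1 : Ω → ℝ≥0∞)) :=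
    Measurable.indicator (@measurable_const ℝ≥0∞ Ω _ m₁ 1) hA
  calc ∫⁻ ω in A, f ω ∂μ = ∫⁻ ω, A.indicator 1 ω * f ω ∂μ := by
        rw [← lintegral_indicator (hm₁ A hA)]
        congr 1 with ω
        by_cases hω : ω ∈ A <;> simp [hω]
    _ = μ A * ∫⁻ ω, f ω ∂μ := by
        rw [lintegral_mul_eq_lintegral_mul_lintegral_of_independent_measurableSpace hm₁ hm₂
          hindep hind hf, lintegral_indicator_one (hm₁ A hA)]

theorem lintegral_eq_tsum_setLIntegral_fiber {Ω ι : Type*} [MeasurableSpace Ω]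
    [MeasurableSpace ι] [MeasurableSingletonClass ι] [Countable ι] {μ : Measure Ω}
    {X : Ω → ι} (hX : Measurable X) (f : Ω → ℝ≥0∞) :
    ∫⁻ ω, f ω ∂μ = ∑' k, ∫⁻ ω in X ⁻¹' {k}, f ω ∂μ := by
  rw [← lintegral_iUnion (fun k => hX (measurableSet_singleton k)) (pairwise_disjoint_fiber X),
    ← Set.preimage_iUnion, Set.iUnion_of_singleton, Set.preimage_univ, setLIntegral_univ]

theorem lintegral_comp_eq_lintegral_lintegral_of_indep {Ω ι : Type*}
    {m mΩ : MeasurableSpace Ω} {μ : Measure Ω} [MeasurableSpace ι] [MeasurableSingletonClass ι]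
    [Countable ι] {X : Ω → ι} (hX : Measurable X) {F : Ω → ι → ℝ≥0∞}
    (hF : ∀ k, Measurable[m] (F · k)) (hm : m ≤ mΩ)
    (hindep : Indep (MeasurableSpace.comap X inferInstance) m μ) :
    ∫⁻ ω, F ω (X ω) ∂μ = ∫⁻ ω, ∫⁻ ω', F ω' (X ω) ∂μ ∂μ := by
  rw [lintegral_eq_tsum_setLIntegral_fiber hX (fun ω => F ω (X ω)),
    lintegral_eq_tsum_setLIntegral_fiber hX (fun ω => ∫⁻ ω', F ω' (X ω) ∂μ)]
  refine tsum_congr fun k => ?_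
  have hfiber : MeasurableSet (X ⁻¹' {k}) := hX (measurableSet_singleton k)
  have hfreeze : ∀ G : ι → Ω → ℝ≥0∞,
      ∫⁻ ω in X ⁻¹' {k}, G (X ω) ω ∂μ = ∫⁻ ω in X ⁻¹' {k}, G k ω ∂μ :=
    fun G => setLIntegral_congr_fun hfiber fun ω (hω : X ω = k) => by rw [hω]
  rw [hfreeze (fun k ω => F ω k), hfreeze (fun k _ => ∫⁻ ω', F ω' k ∂μ), setLIntegral_const,
    setLIntegral_eq_measure_mul_lintegral_of_indep (Measurable.comap_le hX) hm hindep
      ⟨{k}, measurableSet_singleton k, rfl⟩ (hF k), mul_comm]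

theorem lintegral_ofReal_abs_rpow_gaussianReal_lt_top (μ : ℝ) (v : ℝ≥0) {p : ℝ} (hp : 0 ≤ p) :
    ∫⁻ x, ENNReal.ofReal (|x| ^ p) ∂gaussianReal μ v < ⊤ := by
  have h := (memLp_id_gaussianReal (μ := μ) (v := v) p.toNNReal).integrable_norm_rpow'
  simp only [id, Real.norm_eq_abs, ENNReal.coe_toReal, Real.coe_toNNReal p hp] at h
  exact h.lintegral_lt_top

theorem lintegral_ofReal_abs_rpow_gaussianReal_sq (σ : ℝ≥0) (p : ℝ) :
    ∫⁻ x, ENNReal.ofReal (|x| ^ p) ∂gaussianReal 0 (σ ^ 2)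
      = ENNReal.ofReal ((σ : ℝ) ^ p) * ∫⁻ x, ENNReal.ofReal (|x| ^ p) ∂gaussianReal 0 1 := by
  have hmap : (gaussianReal 0 1).map ((σ : ℝ) * ·) = gaussianReal 0 (σ ^ 2) := by
    rw [gaussianReal_map_const_mul]
    congr 1
    · simp
    · ext; simp
  have hφ : Measurable fun x : ℝ => ENNReal.ofReal (|x| ^ p) := by fun_prop
  rw [← hmap, lintegral_map hφ (measurable_const_mul _), ← lintegral_const_mul _ hφ]
  congr 1 with x
  rw [abs_mul, NNReal.abs_eq, Real.mul_rpow σ.coe_nonneg (abs_nonneg x),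
    ENNReal.ofReal_mul (by positivity)]

theorem lintegral_ofReal_abs_rpow_comp_of_indep {Ω ι : Type*} {m mΩ : MeasurableSpace Ω}
    {μ : Measure Ω} [MeasurableSpace ι] [MeasurableSingletonClass ι] [Countable ι] {X : Ω → ι}
    (hX : Measurable X) {V : Ω → ι → ℝ} (hV : ∀ k, Measurable[m] (V · k)) (hm : m ≤ mΩ)
    (hindep : Indep (MeasurableSpace.comap X inferInstance) m μ) {σ : ι → ℝ≥0}
    (hlaw : ∀ k, μ.map (V · k) = gaussianReal 0 (σ k ^ 2)) (p : ℝ) :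
    ∫⁻ ω, ENNReal.ofReal (|V ω (X ω)| ^ p) ∂μ
      = (∫⁻ ω, ENNReal.ofReal ((σ (X ω) : ℝ) ^ p) ∂μ)
        * ∫⁻ x, ENNReal.ofReal (|x| ^ p) ∂gaussianReal 0 1 := by
  have hφ : Measurable fun x : ℝ => ENNReal.ofReal (|x| ^ p) := by fun_prop
  have hmoment (k : ι) : ∫⁻ ω, ENNReal.ofReal (|V ω k| ^ p) ∂μ
      = ENNReal.ofReal ((σ k : ℝ) ^ p) * ∫⁻ x, ENNReal.ofReal (|x| ^ p) ∂gaussianReal 0 1 := by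
    rw [← lintegral_map hφ ((hV k).mono hm le_rfl), hlaw,
      lintegral_ofReal_abs_rpow_gaussianReal_sq]
  rw [lintegral_comp_eq_lintegral_lintegral_of_indep
      (F := fun ω k => ENNReal.ofReal (|V ω k| ^ p)) hX (fun k => hφ.comp (hV k)) hm hindep]
  simp only [hmoment]
  have hσX : Measurable fun ω => ENNReal.ofReal ((σ (X ω) : ℝ) ^ p) :=
    (Measurable.of_discrete (f := fun k => ENNReal.ofReal ((σ k : ℝ) ^ p))).comp hX
  exact lintegral_mul_const _ hσX

theorem tsum_mul_ofReal_rpow_lt_top {q : ℕ → ℝ≥0∞} (hq : ∀ n, q n ≤ 1) {C η : ℝ} {K : ℕ}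
    (htail : ∀ n, K ≤ n → q n ≤ ENNReal.ofReal (C * (n : ℝ) ^ (-η))) {s : ℝ} (hs : s < η - 1) :
    ∑' n, q n * ENNReal.ofReal ((n : ℝ) ^ s) < ⊤ := by
  have hhead : ∑ n ∈ Finset.range K, q n * ENNReal.ofReal ((n : ℝ) ^ s) < ⊤ :=
    ENNReal.sum_lt_top.mpr fun n _ =>
      ENNReal.mul_lt_top ((hq n).trans_lt ENNReal.one_lt_top) ENNReal.ofReal_lt_top
  have htail_le : ∀ n, q (n + K) * ENNReal.ofReal (((n + K : ℕ) : ℝ) ^ s)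
      ≤ ENNReal.ofReal (C * ((n + K : ℕ) : ℝ) ^ (s - η)) := by
    intro n
    calc q (n + K) * ENNReal.ofReal (((n + K : ℕ) : ℝ) ^ s)
        ≤ ENNReal.ofReal (C * ((n + K : ℕ) : ℝ) ^ (-η))
            * ENNReal.ofReal (((n + K : ℕ) : ℝ) ^ s) :=
          mul_le_mul_left (htail _ (Nat.le_add_left K n)) _
      _ = ENNReal.ofReal (C * ((n + K : ℕ) : ℝ) ^ (s - η)) := by
          rw [← ENNReal.ofReal_mul' (by positivity), mul_assoc,
            ← Real.rpow_add' (Nat.cast_nonneg _) (by linarith), neg_add_eq_sub]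
  have hsummable : Summable fun n : ℕ => C * ((n + K : ℕ) : ℝ) ^ (s - η) :=
    ((summable_nat_add_iff K).mpr (Real.summable_nat_rpow.mpr (by linarith))).mul_left C
  rw [← ENNReal.summable.sum_add_tsum_nat_add' (k := K)]
  exact ENNReal.add_lt_top.mpr
    ⟨hhead, (ENNReal.tsum_le_tsum htail_le).trans_lt hsummable.tsum_ofReal_lt_top⟩

theorem lintegral_ofReal_natCast_rpow_lt_top {Ω : Type*} [MeasurableSpace Ω] {μ : Measure Ω}
    [IsProbabilityMeasure μ] {Z : Ω → ℕ} (hZ : Measurable Z) {C η : ℝ} {K : ℕ}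
    (htail : ∀ n, K ≤ n → μ {ω | Z ω = n} ≤ ENNReal.ofReal (C * (n : ℝ) ^ (-η))) {s : ℝ}
    (hs : s ≤ 0 ∨ s < η - 1) :
    ∫⁻ ω, ENNReal.ofReal ((Z ω : ℝ) ^ s) ∂μ < ⊤ := by
  rcases hs with hs | hs
  · have hle : ∀ n : ℕ, (n : ℝ) ^ s ≤ 1 := by
      rintro (_ | n)
      · simpa using Real.zero_rpow_le_one s
      · exact Real.rpow_le_one_of_one_le_of_nonpos (by simp) hs
    calc ∫⁻ ω, ENNReal.ofReal ((Z ω : ℝ) ^ s) ∂μ ≤ ∫⁻ _, 1 ∂μ :=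
          lintegral_mono fun ω => ENNReal.ofReal_le_one.mpr (hle (Z ω))
      _ < ⊤ := by simp
  · rw [← lintegral_map (f := fun n : ℕ => ENNReal.ofReal ((n : ℝ) ^ s)) .of_discrete hZ,
      lintegral_countable']
    simp_rw [Measure.map_apply hZ (measurableSet_singleton _), mul_comm (ENNReal.ofReal _)]
    exact tsum_mul_ofReal_rpow_lt_top (fun n => prob_le_one) htail hs

theorem rpow_sum_mul_prod_rpow_le {ι κ : Type*} [Fintype ι] [Fintype κ] {c : κ → ℝ}
    (hc : ∀ j, 0 ≤ c j) (α : κ → ι → ℝ) {z : ι → ℝ} (hz : ∀ i, 0 ≤ z i) {p : ℝ} (hp : 1 ≤ p) :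
    (∑ j, c j * ∏ i, z i ^ α j i) ^ p
      ≤ ∑ j, (Fintype.card κ : ℝ) ^ (p - 1) * c j ^ p * ∏ i, z i ^ (α j i * p) := by
  have hprod : ∀ j, 0 ≤ ∏ i, z i ^ α j i :=
    fun j => Finset.prod_nonneg fun i _ => Real.rpow_nonneg (hz i) _
  calc (∑ j, c j * ∏ i, z i ^ α j i) ^ p
      ≤ (Fintype.card κ : ℝ) ^ (p - 1) * ∑ j, (c j * ∏ i, z i ^ α j i) ^ p :=
        Real.rpow_sum_le_const_mul_sum_rpow_of_nonneg _ hp fun j _ => mul_nonneg (hc j) (hprod j)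
    _ = ∑ j, (Fintype.card κ : ℝ) ^ (p - 1) * c j ^ p * ∏ i, z i ^ (α j i * p) := by
        rw [Finset.mul_sum]
        refine Finset.sum_congr rfl fun j _ => ?_
        rw [Real.mul_rpow (hc j) (hprod j),
          ← Real.finsetProd_rpow _ _ (fun i _ => Real.rpow_nonneg (hz i) _)]
        simp_rw [← Real.rpow_mul (hz _)]
        ring

theorem lintegral_ofReal_rpow_sum_mul_prod_lt_top {Ω ι κ : Type*} [MeasurableSpace Ω]
    {μ : Measure Ω} [Fintype ι] [Fintype κ] {Y : ι → Ω → ℝ} (hY : iIndepFun Y μ)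
    (hYm : ∀ i, Measurable (Y i)) (hY0 : ∀ i ω, 0 ≤ Y i ω) {c : κ → ℝ} (hc : ∀ j, 0 ≤ c j)
    (α : κ → ι → ℝ) {p : ℝ} (hp : 1 ≤ p)
    (hfin : ∀ j i, ∫⁻ ω, ENNReal.ofReal (Y i ω ^ (α j i * p)) ∂μ < ⊤) :
    ∫⁻ ω, ENNReal.ofReal ((∑ j, c j * ∏ i, Y i ω ^ α j i) ^ p) ∂μ < ⊤ := by
  set a : κ → ℝ≥0∞ := fun j => ENNReal.ofReal ((Fintype.card κ : ℝ) ^ (p - 1) * c j ^ p)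
  have hbound : ∀ ω, ENNReal.ofReal ((∑ j, c j * ∏ i, Y i ω ^ α j i) ^ p)
      ≤ ∑ j, a j * ∏ i, ENNReal.ofReal (Y i ω ^ (α j i * p)) := by
    intro ω
    refine (ENNReal.ofReal_le_ofReal (rpow_sum_mul_prod_rpow_le hc α (hY0 · ω) hp)).trans_eq ?_
    rw [ENNReal.ofReal_sum_of_nonneg fun j _ => mul_nonneg (by have := hc j; positivity)
      (Finset.prod_nonneg fun i _ => Real.rpow_nonneg (hY0 i ω) _)]
    refine Finset.sum_congr rfl fun j _ => ?_
    rw [ENNReal.ofReal_mul (by have := hc j; positivity),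
      ENNReal.ofReal_prod_of_nonneg fun i _ => Real.rpow_nonneg (hY0 i ω) _]
  have hmeas : ∀ j i, Measurable fun y : ℝ => ENNReal.ofReal (y ^ (α j i * p)) :=
    fun j i => by fun_prop
  calc ∫⁻ ω, ENNReal.ofReal ((∑ j, c j * ∏ i, Y i ω ^ α j i) ^ p) ∂μ
      ≤ ∫⁻ ω, ∑ j, a j * ∏ i, ENNReal.ofReal (Y i ω ^ (α j i * p)) ∂μ := lintegral_mono hbound
    _ = ∑ j, a j * ∏ i, ∫⁻ ω, ENNReal.ofReal (Y i ω ^ (α j i * p)) ∂μ := by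
        rw [lintegral_finsetSum _ fun j _ => by fun_prop]
        refine Finset.sum_congr rfl fun j _ => ?_
        rw [lintegral_const_mul _ (by fun_prop), lintegral_prod_eq_prod_lintegral_of_indepFun _
          (fun i ω => ENNReal.ofReal (Y i ω ^ (α j i * p))) (hY.comp _ (hmeas j))
          fun i => (hmeas j i).comp (hYm i)]
    _ < ⊤ := ENNReal.sum_lt_top.mpr fun j _ =>
        ENNReal.mul_lt_top ENNReal.ofReal_lt_top (ENNReal.prod_lt_top fun i _ => hfin j i)

theorem subordinated_GRF_pointwise_moments_discrete_general
    {Ω : Type*} [MeasurableSpace Ω] (P : Measure Ω) [IsProbabilityMeasure P]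
    (d : ℕ) (W : Ω → (Fin d → NNReal) → ℝ)
    (hW : Measurable fun p : Ω × (Fin d → NNReal) => W p.1 p.2)
    (σW : (Fin d → NNReal) → NNReal)
    (hWlaw : ∀ z : Fin d → NNReal,
      Measure.map (fun ω => W ω z) P = gaussianReal 0 (σW z ^ 2))
    (N : ℕ) (c : Fin N → ℝ) (hc : ∀ j, 0 ≤ c j)
    (α : Fin N → Fin d → ℝ)
    (hσW_bound : ∀ z : Fin d → NNReal,
      (σW z : ℝ) ≤ ∑ j, c j * ∏ i, (z i : ℝ) ^ (α j i))
    (Z : Fin d → Ω → ℕ) (hZ : ∀ i, Measurable (Z i))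
    (hZ_indep : iIndepFun Z P)
    (hZW_indep : Indep (⨆ i, MeasurableSpace.comap (Z i) inferInstance)
      (⨆ x : Fin d → NNReal, MeasurableSpace.comap (fun ω => W ω x) inferInstance) P)
    (C : ℝ) (K : ℕ) (η : Fin d → ℝ)
    (hZ_tail : ∀ i, ∀ k : ℕ, K ≤ k →
      P {ω | Z i ω = k} ≤ ENNReal.ofReal (C * (k : ℝ) ^ (-η i)))
    (p : ℝ) (hp : 1 ≤ p)
    -- `p < a`, i.e. `p < (η_i − 1)/α_i^{(j)}` whenever `α_i^{(j)} ≠ 0`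
    (hpa : ∀ i j, α j i ≠ 0 → p < (η i - 1) / α j i) :
    ∫⁻ ω, ENNReal.ofReal (|W ω fun i => (Z i ω : NNReal)| ^ p) ∂P < ⊤ := by
  have hp0 : 0 ≤ p := zero_le_one.trans hp
  have hWσ (z) : Measurable[⨆ z, MeasurableSpace.comap (fun ω => W ω z) inferInstance]
      fun ω => W ω z := Measurable.of_comap_le (le_iSup_of_le z le_rfl)
  have hXσ : Measurable[⨆ i, MeasurableSpace.comap (Z i) inferInstance] fun ω i => Z i ω :=
    @measurable_pi_lambda _ _ _ (_) _ _ fun i => Measurable.of_comap_le (le_iSup_of_le i le_rfl)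
  have hexp (j i) : α j i * p ≤ 0 ∨ α j i * p < η i - 1 := by
    rcases lt_trichotomy (α j i) 0 with hneg | hzero | hpos
    · exact .inl (mul_nonpos_of_nonpos_of_nonneg hneg.le hp0)
    · simp [hzero]
    · exact .inr (by simpa [mul_comm, lt_div_iff₀ hpos] using hpa i j hpos.ne')
  refine (lintegral_ofReal_abs_rpow_comp_of_indep (X := fun ω i => Z i ω)
    (V := fun ω k => W ω fun i => (k i : NNReal)) (measurable_pi_lambda _ hZ) (fun _ => hWσ _)
    (iSup_le fun z => (hW.comp (measurable_id.prodMk measurable_const)).comap_le)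
    (indep_of_indep_of_le_left hZW_indep (measurable_iff_comap_le.mp hXσ)) (fun _ => hWlaw _)
    p).trans_lt (ENNReal.mul_lt_top ?_ (lintegral_ofReal_abs_rpow_gaussianReal_lt_top 0 1 hp0))
  refine (lintegral_mono fun ω => ENNReal.ofReal_le_ofReal
    (Real.rpow_le_rpow (σW _).coe_nonneg (hσW_bound _) hp0)).trans_lt ?_
  simpa using lintegral_ofReal_rpow_sum_mul_prod_lt_top (Y := fun i ω => (Z i ω : ℝ))
    (hZ_indep.comp _ fun _ => .of_discrete) (fun i => Measurable.of_discrete.comp (hZ i))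
    (fun _ _ => Nat.cast_nonneg _) hc α hp
    fun j i => lintegral_ofReal_natCast_rpow_lt_top (hZ i) (hZ_tail i) (hexp j i)

/-- **discrete-subordinator moment theorem.** Let `W` be a jointly
measurable, a.s. continuous random field on `ℝ₊^d` with `W(z) ∼ N(0, σ_W²(z))`, where
`σ_W(z) ≤ Σ_j c_j z₁^{α₁^{(j)}} ⋯ z_d^{α_d^{(j)}}`. Let `Z₁,…,Z_d` be mutually independent
`ℕ`-valued random variables, independent of `W`, with `P(Z_i = k) ≤ C k^{−η_i}` for
integers `k ≥ K`. With `a := min{(η_i − 1)/α_i^{(j)} : α_i^{(j)} ≠ 0}` (`a = ∞` if all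
exponents vanish), `E[|W(Z₁,…,Z_d)|^p] < ∞` for every `p ∈ [1, a)`. -/
theorem subordinated_GRF_pointwise_moments_discrete
    {Ω : Type*} [MeasurableSpace Ω] (P : Measure Ω) [IsProbabilityMeasure P]
    (d : ℕ) (W : Ω → (Fin d → NNReal) → ℝ)
    (hW : Measurable fun p : Ω × (Fin d → NNReal) => W p.1 p.2)
    (hWcont : ∀ᵐ ω ∂P, Continuous (W ω))
    (σW : (Fin d → NNReal) → NNReal)
    (hWlaw : ∀ z : Fin d → NNReal,
      Measure.map (fun ω => W ω z) P = gaussianReal 0 (σW z ^ 2))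
    (N : ℕ) (hN : 0 < N) (c : Fin N → ℝ) (hc : ∀ j, 0 ≤ c j)
    (α : Fin N → Fin d → ℝ) (hα : ∀ j i, 0 ≤ α j i)
    (hσW_bound : ∀ z : Fin d → NNReal,
      (σW z : ℝ) ≤ ∑ j, c j * ∏ i, (z i : ℝ) ^ (α j i))
    (Z : Fin d → Ω → ℕ) (hZ : ∀ i, Measurable (Z i))
    (hZ_indep : iIndepFun Z P)
    (hZW_indep : Indep (⨆ i, MeasurableSpace.comap (Z i) inferInstance)
      (⨆ x : Fin d → NNReal, MeasurableSpace.comap (fun ω => W ω x) inferInstance) P)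
    (C : ℝ) (K : ℕ) (hC : 0 < C) (hK : 0 < K) (η : Fin d → ℝ) (hη : ∀ i, 0 < η i)
    (hZ_tail : ∀ i, ∀ k : ℕ, K ≤ k →
      P {ω | Z i ω = k} ≤ ENNReal.ofReal (C * (k : ℝ) ^ (-η i)))
    (p : ℝ) (hp : 1 ≤ p)
    -- `p < a`, i.e. `p < (η_i − 1)/α_i^{(j)}` whenever `α_i^{(j)} ≠ 0`
    (hpa : ∀ i j, α j i ≠ 0 → p < (η i - 1) / α j i) :
    ∫⁻ ω, ENNReal.ofReal (|W ω fun i => (Z i ω : NNReal)| ^ p) ∂P < ⊤ :=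
  subordinated_GRF_pointwise_moments_discrete_general P d W hW σW hWlaw N c hc α hσW_bound Z hZ
    hZ_indep hZW_indep C K η hZ_tail p hp hpa
end
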